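/- arXiv:2310.04643 — 3 statements merged into one kernel-verified Lean document; each statement's English description precedes it below -/
import Mathlib

section
/- Suppose nonnegative reals R_0, R_1, ..., R_N with R_0 = 0 satisfy R_n ≤ R_{n-1} + Qτ(R_{n-1} + R_n) + Qτ² Σ_{m=1}^{n-1} R_m + Qτ² for all 1 ≤ n ≤ N, where Q > 0, τ > 0, Nτ = T. Then for τ sufficiently small (e.g. Qτ ≤ 1/2), there is a constant C depending only on Q and T such that R_n ≤ Cτ for all 1 ≤ n ≤ N. -/
/-!
Absorbing the implicit term `Qτ R_n` (possible since `Qτ ≤ 1/2`) turns the recursion into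
`R_n ≤ (1 + bτ) R_{n-1} + bτ² ∑_{m<n} R_m + bτ²` with `b = 4Q`. This is dominated by the
comparison sequence `y_n = τ((1 + aτ)^n - 1)`, `a = 2b + 3`: it satisfies
`y_n = (1 + aτ) y_{n-1} + aτ²` and `aτ ∑_{m<n} y_m ≤ y_n`, which makes it a supersolution,
and `y_n ≤ τ e^{a n τ} ≤ τ e^{aT}`.
-/

open Finset

lemma le_one_add_four_mul_add_two_mul {q r r' s : ℝ} (hq₀ : 0 ≤ q) (hq : q ≤ 1 / 2)
    (hr' : 0 ≤ r') (hs : 0 ≤ s) (h : r ≤ r' + q * (r' + r) + s) :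
    r ≤ (1 + 4 * q) * r' + 2 * s := by
  nlinarith [mul_nonneg hq₀ hr', mul_nonneg (mul_nonneg hq₀ hq₀) hr', mul_nonneg hq₀ hs]

lemma one_add_pow_le_exp_mul {x : ℝ} (hx : 0 ≤ 1 + x) (n : ℕ) :
    (1 + x) ^ n ≤ Real.exp (n * x) := by
  rw [Real.exp_nat_mul]
  exact pow_le_pow_left₀ hx (by linarith [Real.add_one_le_exp x]) n

section Comparison

variable {τ : ℝ}

lemma mul_sum_range_pow_sub_one_le {a : ℝ} (hτ : 0 ≤ τ) (ha : 0 ≤ a) (n : ℕ) :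
    a * τ * ∑ m ∈ range n, τ * ((1 + a * τ) ^ m - 1) ≤ τ * ((1 + a * τ) ^ n - 1) := by
  have hgeom := geom_sum_mul (1 + a * τ) n
  simp only [mul_sub, mul_one, sum_sub_distrib, sum_const, card_range, nsmul_eq_mul,
    ← mul_sum] at hgeom ⊢
  nlinarith [mul_nonneg (mul_nonneg ha hτ) (mul_nonneg hτ (Nat.cast_nonneg n : (0 : ℝ) ≤ n))]

lemma supersolution_step {b Y S : ℝ} (hτ : 0 ≤ τ) (hb : 0 ≤ b) (hbτ : b * τ ≤ 2)
    (hY : 0 ≤ Y)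
    (hS : (2 * b + 3) * τ * S ≤ (1 + (2 * b + 3) * τ) * Y + (2 * b + 3) * τ ^ 2) :
    (1 + b * τ) * Y + b * τ ^ 2 * S + b * τ ^ 2
      ≤ (1 + (2 * b + 3) * τ) * Y + (2 * b + 3) * τ ^ 2 := by
  have hbS : (2 * b + 3) * (b * τ ^ 2 * S)
      ≤ b * τ * ((1 + (2 * b + 3) * τ) * Y + (2 * b + 3) * τ ^ 2) := by
    nlinarith [mul_le_mul_of_nonneg_left hS (mul_nonneg hb hτ)]
  nlinarith [mul_nonneg hb hτ, mul_nonneg (mul_nonneg hb hτ) hY, mul_nonneg hτ hY,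
    mul_nonneg (mul_nonneg hb hτ) (mul_nonneg hτ hY), mul_nonneg hb (mul_nonneg hτ hτ),
    mul_nonneg (mul_nonneg hb hτ) (mul_nonneg hτ hτ)]

theorem le_of_memory_recurrence {N : ℕ} {b : ℝ} {x : ℕ → ℝ} (hτ : 0 ≤ τ)
    (hb : 0 ≤ b) (hbτ : b * τ ≤ 2) (hx₀ : x 0 = 0)
    (hx : ∀ n, 1 ≤ n → n ≤ N →
      x n ≤ (1 + b * τ) * x (n - 1) + b * τ ^ 2 * ∑ m ∈ range n, x m + b * τ ^ 2) :
    ∀ n ≤ N, x n ≤ τ * ((1 + (2 * b + 3) * τ) ^ n - 1) := by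
  set a := 2 * b + 3
  have ha : 0 ≤ a := by positivity
  intro n
  induction n using Nat.strong_induction_on with
  | _ n ih =>
    intro hnN
    rcases n with _ | k
    · simp [hx₀]
    have hY : 0 ≤ τ * ((1 + a * τ) ^ k - 1) :=
      mul_nonneg hτ (sub_nonneg.mpr (one_le_pow₀ (le_add_of_nonneg_right (by positivity))))
    have hy_succ : τ * ((1 + a * τ) ^ (k + 1) - 1)
        = (1 + a * τ) * (τ * ((1 + a * τ) ^ k - 1)) + a * τ ^ 2 := by ring
    have hS := mul_sum_range_pow_sub_one_le hτ ha (k + 1)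
    rw [hy_succ] at hS ⊢
    calc x (k + 1)
        ≤ (1 + b * τ) * x k + b * τ ^ 2 * ∑ m ∈ range (k + 1), x m + b * τ ^ 2 :=
          hx _ le_add_self hnN
      _ ≤ (1 + b * τ) * (τ * ((1 + a * τ) ^ k - 1))
          + b * τ ^ 2 * ∑ m ∈ range (k + 1), τ * ((1 + a * τ) ^ m - 1) + b * τ ^ 2 := by
        gcongr (1 + b * τ) * ?_ + b * τ ^ 2 * ?_ + _
        · exact ih k (by omega) (by omega)
        · exact sum_le_sum fun m hm ↦ ih m (mem_range.mp hm) (by grind)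
      _ ≤ _ := supersolution_step hτ hb hbτ hY hS

end Comparison

theorem stmt6_general (Q T : ℝ) (hQ : 0 < Q) :
    ∃ C : ℝ, ∀ (N : ℕ) (τ : ℝ) (R : ℕ → ℝ),
      0 < τ → (N : ℝ) * τ = T → Q * τ ≤ 1 / 2 →
      R 0 = 0 → (∀ n, 0 ≤ R n) →
      (∀ n : ℕ, 1 ≤ n → n ≤ N →
        R n ≤ R (n - 1) + Q * τ * (R (n - 1) + R n)
          + Q * τ ^ 2 * ∑ m ∈ Ico 1 n, R m + Q * τ ^ 2) →
      ∀ n : ℕ, 1 ≤ n → n ≤ N → R n ≤ C * τ := by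
  set a := 2 * (4 * Q) + 3
  refine ⟨Real.exp (a * T), fun N τ R hτ hNτ hQτ hR₀ hR hrec n _ hnN ↦ ?_⟩
  have hexplicit : ∀ n, 1 ≤ n → n ≤ N → R n ≤ (1 + 4 * Q * τ) * R (n - 1)
      + 4 * Q * τ ^ 2 * ∑ m ∈ range n, R m + 4 * Q * τ ^ 2 := by
    intro n hn hnN
    have hsum : 0 ≤ ∑ m ∈ Ico 1 n, R m := sum_nonneg fun m _ ↦ hR m
    have h := le_one_add_four_mul_add_two_mul (by positivity) hQτ (hR _) (by positivity)
      ((hrec n hn hnN).trans_eq (add_assoc _ _ _))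
    rw [sum_range_eq_add_Ico _ hn, hR₀, zero_add]
    nlinarith [mul_nonneg hQ.le (mul_nonneg (sq_nonneg τ) hsum)]
  have hnτ : n * τ ≤ T := hNτ ▸ mul_le_mul_of_nonneg_right (by exact_mod_cast hnN) hτ.le
  calc R n ≤ τ * ((1 + a * τ) ^ n - 1) :=
        le_of_memory_recurrence hτ.le (by positivity) (by linarith) hR₀ hexplicit n hnN
    _ ≤ τ * (1 + a * τ) ^ n := by nlinarith
    _ ≤ τ * Real.exp (n * (a * τ)) := by gcongr; exact one_add_pow_le_exp_mul (by positivity) n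
    _ = Real.exp (a * (n * τ)) * τ := by rw [mul_comm, mul_left_comm]
    _ ≤ Real.exp (a * T) * τ := by gcongr

theorem stmt6 (Q T : ℝ) (hQ : 0 < Q) (hT : 0 < T) :
    ∃ C : ℝ, ∀ (N : ℕ) (τ : ℝ) (R : ℕ → ℝ),
      0 < τ → (N : ℝ) * τ = T → Q * τ ≤ 1 / 2 →
      R 0 = 0 → (∀ n, 0 ≤ R n) →
      (∀ n : ℕ, 1 ≤ n → n ≤ N →
        R n ≤ R (n - 1) + Q * τ * (R (n - 1) + R n)
          + Q * τ ^ 2 * ∑ m ∈ Ico 1 n, R m + Q * τ ^ 2) →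
      ∀ n : ℕ, 1 ≤ n → n ≤ N → R n ≤ C * τ :=
  stmt6_general Q T hQ
end

section
/- Let w̃ ∈ R^N with ‖w̃‖ ≤ Q_4, let v_1,...,v_m be orthonormal with |w̃ᵀv_j| ≤ Gτ² for all j, and suppose |‖w̃‖² - 1| ≤ ε with ε + mG²τ⁴ < 1. Set Y := (‖w̃‖² - Σ_{j=1}^m (w̃ᵀv_j)²)^{1/2} and v := (1/Y)(w̃ - Σ_{j=1}^m (w̃ᵀv_j) v_j). Then |1 - Y| ≤ ε + mG²τ⁴ and ‖v - w̃‖ ≤ (Q_4(ε + mG²τ⁴) + mGτ²)/(1 - ε - mG²τ⁴)^{1/2}. -/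
open scoped RealInnerProductSpace
open Finset

theorem stmt8 (N m : ℕ) (w : EuclideanSpace ℝ (Fin N))
    (Q₄ G τ ε : ℝ) (hQ₄ : 1 ≤ Q₄) (hG : 0 < G) (hτ : 0 < τ) (hε : 0 < ε)
    (hw : ‖w‖ ≤ Q₄)
    (v : Fin m → EuclideanSpace ℝ (Fin N))
    (horth : ∀ j l : Fin m, ⟪v j, v l⟫ = if j = l then (1:ℝ) else 0)
    (hsmall : ∀ j : Fin m, |⟪w, v j⟫| ≤ G * τ ^ 2)
    (hnorm : |‖w‖ ^ 2 - 1| ≤ ε)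
    (hlt : ε + (m : ℝ) * G ^ 2 * τ ^ 4 < 1)
    (Y : ℝ) (hY : Y = Real.sqrt (‖w‖ ^ 2 - ∑ j : Fin m, ⟪w, v j⟫ ^ 2)) :
    |1 - Y| ≤ ε + (m : ℝ) * G ^ 2 * τ ^ 4 ∧
    ‖Y⁻¹ • (w - ∑ j : Fin m, ⟪w, v j⟫ • v j) - w‖
      ≤ (Q₄ * (ε + (m : ℝ) * G ^ 2 * τ ^ 4) + (m : ℝ) * G * τ ^ 2)
        / Real.sqrt (1 - ε - (m : ℝ) * G ^ 2 * τ ^ 4) := by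
  set S : ℝ := ∑ j : Fin m, ⟪w, v j⟫ ^ 2 with hSdef
  set δ : ℝ := ε + (m : ℝ) * G ^ 2 * τ ^ 4 with hδdef
  have hδpos : 0 < δ := by positivity
  have hSnn : 0 ≤ S := Finset.sum_nonneg fun j _ => sq_nonneg _
  have hSle : S ≤ (m : ℝ) * G ^ 2 * τ ^ 4 := by
    calc S ≤ ∑ _j : Fin m, (G * τ ^ 2) ^ 2 := by
          refine Finset.sum_le_sum fun j _ => ?_
          have h := hsmall j
          nlinarith [abs_nonneg (⟪w, v j⟫), sq_abs (⟪w, v j⟫)]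
      _ = (m : ℝ) * G ^ 2 * τ ^ 4 := by
          simp [Finset.card_univ]; ring
  have hw2 : 1 - ε ≤ ‖w‖ ^ 2 := by
    have := abs_le.1 hnorm; linarith [this.1]
  have hkey : 1 - δ ≤ ‖w‖ ^ 2 - S := by
    simp only [hδdef]; linarith
  have h1δ : 0 < 1 - δ := by linarith
  have hYpos : 0 < Y := by
    rw [hY]; exact Real.sqrt_pos.2 (by linarith)
  have hYne : Y ≠ 0 := ne_of_gt hYpos
  have hY2 : Y ^ 2 = ‖w‖ ^ 2 - S := by
    rw [hY, Real.sq_sqrt (by linarith)]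
  -- Part 1
  have habsY2 : |1 - Y ^ 2| ≤ δ := by
    rw [hY2]
    have h := abs_le.1 hnorm
    rw [abs_le]
    constructor <;> simp only [hδdef] <;> nlinarith [h.1, h.2]
  have part1 : |1 - Y| ≤ δ := by
    have hfac : |1 - Y| * (1 + Y) = |1 - Y ^ 2| := by
      rw [← abs_of_pos (show (0:ℝ) < 1 + Y by linarith), ← abs_mul]
      ring_nf
    nlinarith [abs_nonneg (1 - Y), abs_nonneg (1 - Y ^ 2)]
  refine ⟨part1, ?_⟩
  -- Part 2
  have hvnorm : ∀ j : Fin m, ‖v j‖ = 1 := by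
    intro j
    have h := horth j j
    simp only [if_pos rfl] at h
    have : ‖v j‖ ^ 2 = 1 := by rw [← real_inner_self_eq_norm_sq]; exact h
    nlinarith [norm_nonneg (v j)]
  set T : EuclideanSpace ℝ (Fin N) := ∑ j : Fin m, ⟪w, v j⟫ • v j with hTdef
  have hTle : ‖T‖ ≤ (m : ℝ) * G * τ ^ 2 := by
    calc ‖T‖ ≤ ∑ j : Fin m, ‖⟪w, v j⟫ • v j‖ := norm_sum_le _ _
      _ ≤ ∑ _j : Fin m, G * τ ^ 2 := by
          refine Finset.sum_le_sum fun j _ => ?_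
          rw [norm_smul, hvnorm j, mul_one]
          exact hsmall j
      _ = (m : ℝ) * G * τ ^ 2 := by simp [Finset.card_univ]; ring
  have hvec : Y⁻¹ • (w - T) - w = Y⁻¹ • ((1 - Y) • w - T) := by
    rw [smul_sub, smul_sub, sub_smul, one_smul, smul_sub, smul_smul,
      inv_mul_cancel₀ hYne, one_smul]
    abel
  rw [hvec, norm_smul]
  have hnumle : ‖(1 - Y) • w - T‖ ≤ Q₄ * δ + (m : ℝ) * G * τ ^ 2 := by
    calc ‖(1 - Y) • w - T‖ ≤ ‖(1 - Y) • w‖ + ‖T‖ := norm_sub_le _ _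
      _ = |1 - Y| * ‖w‖ + ‖T‖ := by rw [norm_smul]; rfl
      _ ≤ δ * Q₄ + (m : ℝ) * G * τ ^ 2 := by
          have h1 : |1 - Y| * ‖w‖ ≤ δ * Q₄ :=
            mul_le_mul part1 hw (norm_nonneg _) (le_of_lt hδpos)
          linarith
      _ = Q₄ * δ + (m : ℝ) * G * τ ^ 2 := by ring
  have hYge : Real.sqrt (1 - ε - (m : ℝ) * G ^ 2 * τ ^ 4) ≤ Y := by
    rw [hY]
    exact Real.sqrt_le_sqrt (by simp only [hδdef] at hkey ⊢; linarith)
  have hsqrtpos : 0 < Real.sqrt (1 - ε - (m : ℝ) * G ^ 2 * τ ^ 4) := by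
    apply Real.sqrt_pos.2; simp only [hδdef] at h1δ; linarith
  rw [norm_inv, Real.norm_eq_abs, abs_of_pos hYpos]
  rw [inv_mul_eq_div]
  apply div_le_div₀ (by positivity) hnumle hsqrtpos hYge
end

section
/- Let v_1,...,v_k : [0,∞) → R^N solve the ODE system dv_i/dt = γ (I - v_i v_iᵀ - 2Σ_{j=1}^{i-1} v_j v_jᵀ) J(t) v_i for i = 1,...,k, where J(t) is a continuous family of symmetric N×N matrices and γ > 0. If v_i(0)ᵀ v_j(0) = δ_{ij} for all 1 ≤ i, j ≤ k, then v_i(t)ᵀ v_j(t) = δ_{ij} for all t ≥ 0. -/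
open scoped RealInnerProductSpace
open Finset

/-!
Write `G(t) = (v_iᵀ v_j)` and `c(t) = (v_lᵀ J v_m)`. Differentiating, the dynamics give
`G' = γ (2c + L_c G)` for an operator `L_c` linear in `G`, and because `c` is symmetric the
identity frame is an equilibrium, `2c + L_c I = 0`. Hence the defect `G - I` solves the linear
equation `(G - I)' = γ L_c (G - I)` with coefficients bounded on compact time intervals, and
vanishes at `t = 0`; Grönwall's inequality forces it to vanish for all `t ≥ 0`.
-/

namespace HiSD

variable {E : Type*} [NormedAddCommGroup E] [InnerProductSpace ℝ E] {k : ℕ}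

-- `(I - v_i v_iᵀ - 2 ∑_{j<i} v_j v_jᵀ) A v_i`, the HiSD direction field without the factor `γ`.
def dynamics (A : E →ₗ[ℝ] E) (v : Fin k → E) (i : Fin k) : E :=
  A (v i) - ⟪v i, A (v i)⟫ • v i
    - (2:ℝ) • ∑ j ∈ univ.filter (fun j : Fin k => j < i), ⟪v j, A (v i)⟫ • v j

def coupling (A : E →ₗ[ℝ] E) (v : Fin k → E) (p : Fin k × Fin k) : ℝ :=
  ⟪v p.1, A (v p.2)⟫

def gram (v : Fin k → E) (p : Fin k × Fin k) : ℝ := ⟪v p.1, v p.2⟫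

def kronecker (p : Fin k × Fin k) : ℝ := if p.1 = p.2 then 1 else 0

def gramOp (c h : Fin k × Fin k → ℝ) (p : Fin k × Fin k) : ℝ :=
  -(c (p.1, p.1) + c (p.2, p.2)) * h p
    - 2 * ∑ l ∈ univ.filter (· < p.1), c (l, p.1) * h (l, p.2)
    - 2 * ∑ l ∈ univ.filter (· < p.2), c (l, p.2) * h (p.1, l)

lemma gramOp_sub (c h₁ h₂ : Fin k × Fin k → ℝ) :
    gramOp c (h₁ - h₂) = gramOp c h₁ - gramOp c h₂ := by
  funext p
  simp only [gramOp, Pi.sub_apply, mul_sub, sum_sub_distrib]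
  ring

lemma gramOp_kronecker {c : Fin k × Fin k → ℝ} (hc : ∀ l m, c (l, m) = c (m, l))
    (p : Fin k × Fin k) : gramOp c kronecker p = -2 * c p := by
  obtain ⟨i, j⟩ := p
  simp only [gramOp, kronecker, mul_ite, mul_one, mul_zero]
  rcases lt_trichotomy i j with hij | rfl | hij
  · simp [hij, hij.ne, not_lt.2 hij.le]
  · simp only [↓reduceIte, sum_ite_eq, sum_ite_eq', mem_filter, mem_univ, lt_self_iff_false,
      and_false, mul_zero, sub_zero]
    ring
  · simp [hij, hij.ne', not_lt.2 hij.le, hc j i]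

lemma norm_gramOp_le (c h : Fin k × Fin k → ℝ) :
    ‖gramOp c h‖ ≤ (2 + 4 * k) * ‖c‖ * ‖h‖ := by
  refine pi_norm_le_iff_of_nonneg (by positivity) |>.2 fun ⟨i, j⟩ => ?_
  have hc : ∀ p, |c p| ≤ ‖c‖ := norm_le_pi_norm c
  have hh : ∀ p, |h p| ≤ ‖h‖ := norm_le_pi_norm h
  have hsum : ∀ (s : Finset (Fin k)) (f g : Fin k → Fin k × Fin k),
      |∑ l ∈ s, c (f l) * h (g l)| ≤ k * (‖c‖ * ‖h‖) := by
    intro s f g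
    calc |∑ l ∈ s, c (f l) * h (g l)| ≤ ∑ l ∈ s, ‖c‖ * ‖h‖ := by
          refine (abs_sum_le_sum_abs _ _).trans (sum_le_sum fun l _ => ?_)
          rw [abs_mul]
          exact mul_le_mul (hc _) (hh _) (abs_nonneg _) (norm_nonneg _)
      _ ≤ k * (‖c‖ * ‖h‖) := by
          rw [sum_const, nsmul_eq_mul]
          gcongr
          exact_mod_cast card_le_univ s |>.trans (Fintype.card_fin k).le
  have hdiag : |(c (i, i) + c (j, j)) * h (i, j)| ≤ 2 * (‖c‖ * ‖h‖) := by
    rw [abs_mul, two_mul, ← add_mul]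
    exact mul_le_mul (abs_add_le _ _ |>.trans (add_le_add (hc _) (hc _))) (hh _) (abs_nonneg _)
      (by positivity)
  have hlt₁ := abs_le.1 (hsum (univ.filter (· < i)) (·, i) (·, j))
  have hlt₂ := abs_le.1 (hsum (univ.filter (· < j)) (·, j) (i, ·))
  rw [Real.norm_eq_abs, gramOp, abs_le]
  constructor <;> linarith [abs_le.1 hdiag]

lemma coupling_symm {A : E →ₗ[ℝ] E} (hA : A.IsSymmetric) (v : Fin k → E) (l m : Fin k) :
    coupling A v (l, m) = coupling A v (m, l) := by
  rw [coupling, coupling, ← hA, real_inner_comm]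

lemma inner_dynamics_add_inner {A : E →ₗ[ℝ] E} (hA : A.IsSymmetric) (v : Fin k → E)
    (i j : Fin k) :
    ⟪v i, dynamics A v j⟫ + ⟪dynamics A v i, v j⟫
      = 2 * coupling A v (i, j) + gramOp (coupling A v) (gram v) (i, j) := by
  simp only [dynamics, gramOp, coupling, gram, inner_sub_left, inner_sub_right,
    real_inner_smul_left, real_inner_smul_right, inner_sum, sum_inner, hA (v i) (v j)]
  ring

-- The constant term `2 c` of the inhomogeneous Gram equation is exactly what the identity frame
-- contributes, so the defect `G - I` solves the homogeneous one.
lemma inner_dynamics_add_inner_eq_gramOp {A : E →ₗ[ℝ] E} (hA : A.IsSymmetric) (v : Fin k → E)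
    (i j : Fin k) :
    ⟪v i, dynamics A v j⟫ + ⟪dynamics A v i, v j⟫
      = gramOp (coupling A v) (gram v - kronecker) (i, j) := by
  rw [inner_dynamics_add_inner hA, gramOp_sub, Pi.sub_apply,
    gramOp_kronecker (coupling_symm hA v)]
  ring

lemma hasDerivAt_gram_sub_kronecker {v : Fin k → ℝ → E} {A : E →ₗ[ℝ] E} (hA : A.IsSymmetric)
    {γ t : ℝ} (hv : ∀ i, HasDerivAt (v i) (γ • dynamics A (v · t) i) t) :
    HasDerivAt (fun s => gram (v · s) - kronecker)
      (γ • gramOp (coupling A (v · t)) (gram (v · t) - kronecker)) t := by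
  refine hasDerivAt_pi.2 fun ⟨i, j⟩ => ?_
  refine ((hv i).inner ℝ (hv j)).sub_const (kronecker (i, j)) |>.congr_deriv ?_
  rw [Pi.smul_apply, smul_eq_mul, ← inner_dynamics_add_inner_eq_gramOp hA,
    real_inner_smul_right, real_inner_smul_left, mul_add]

end HiSD

open HiSD

theorem stmt12_general (N k : ℕ) (γ : ℝ)
    (J : ℝ → (EuclideanSpace ℝ (Fin N) →L[ℝ] EuclideanSpace ℝ (Fin N)))
    (hJcont : Continuous J) (hJsym : ∀ t, IsSelfAdjoint (J t))
    (v : Fin k → ℝ → EuclideanSpace ℝ (Fin N))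
    (hode : ∀ (i : Fin k), ∀ t ∈ Set.Ici (0:ℝ),
      HasDerivAt (v i)
        (γ • (J t (v i t) - ⟪v i t, J t (v i t)⟫ • v i t
          - (2:ℝ) • ∑ j ∈ Finset.univ.filter (fun j : Fin k => j < i),
              ⟪v j t, J t (v i t)⟫ • v j t)) t)
    (hinit : ∀ i j : Fin k, ⟪v i 0, v j 0⟫ = if i = j then (1:ℝ) else 0) :
    ∀ t ≥ (0:ℝ), ∀ i j : Fin k,
      ⟪v i t, v j t⟫ = if i = j then (1:ℝ) else 0 := by
  intro T hT
  set defect := fun s => gram (v · s) - kronecker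
  set c := fun s => coupling (J s : _ →ₗ[ℝ] _) (v · s)
  have hderiv : ∀ t ∈ Set.Ici (0:ℝ), HasDerivAt defect (γ • gramOp (c t) (defect t)) t :=
    fun t ht => hasDerivAt_gram_sub_kronecker (hJsym t).isSymmetric (hode · t ht)
  have hc : ContinuousOn c (Set.Icc 0 T) := by
    have hv : ∀ i, ContinuousOn (v i) (Set.Icc 0 T) := fun i t ht =>
      (hode i t ht.1).continuousAt.continuousWithinAt
    exact continuousOn_pi.2 fun p => (hv p.1).inner (hJcont.continuousOn.clm_apply (hv p.2))
  obtain ⟨C, hC⟩ := isCompact_Icc.exists_bound_of_continuousOn hc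
  have hdefect : defect T = 0 := by
    refine eq_zero_of_abs_deriv_le_mul_abs_self_of_eq_zero_right (K := ‖γ‖ * ((2 + 4 * k) * C))
      (fun t ht => (hderiv t ht.1).continuousAt.continuousWithinAt)
      (fun t ht => (hderiv t ht.1).hasDerivWithinAt) ?_ ?_ T ⟨hT, le_rfl⟩
    · funext p
      simp [defect, gram, kronecker, hinit]
    · intro t ht
      rw [norm_smul, mul_assoc]
      gcongr
      exact (norm_gramOp_le _ _).trans (by gcongr; exact hC t (Set.Ico_subset_Icc_self ht))
  intro i j
  simpa [defect, gram, kronecker, sub_eq_zero] using congrFun hdefect (i, j)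

theorem stmt12 (N k : ℕ) (γ : ℝ) (hγ : 0 < γ)
    (J : ℝ → (EuclideanSpace ℝ (Fin N) →L[ℝ] EuclideanSpace ℝ (Fin N)))
    (hJcont : Continuous J) (hJsym : ∀ t, IsSelfAdjoint (J t))
    (v : Fin k → ℝ → EuclideanSpace ℝ (Fin N))
    (hode : ∀ (i : Fin k), ∀ t ∈ Set.Ici (0:ℝ),
      HasDerivAt (v i)
        (γ • (J t (v i t) - ⟪v i t, J t (v i t)⟫ • v i t
          - (2:ℝ) • ∑ j ∈ Finset.univ.filter (fun j : Fin k => j < i),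
              ⟪v j t, J t (v i t)⟫ • v j t)) t)
    (hinit : ∀ i j : Fin k, ⟪v i 0, v j 0⟫ = if i = j then (1:ℝ) else 0) :
    ∀ t ≥ (0:ℝ), ∀ i j : Fin k,
      ⟪v i t, v j t⟫ = if i = j then (1:ℝ) else 0 :=
  stmt12_general N k γ J hJcont hJsym v hode hinit
end
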